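/- Let S = {s_1 < ⋯ < s_{k_1}} and T = {t_1 < ⋯ < t_{k_2}} be nonempty finite sets of positive integers and let d = gcd{s + t : s ∈ S, t ∈ T}. Then for every positive integer k there exist an integer r, a nonnegative integer f, and nonnegative integers a_{i,j} (1 ≤ i ≤ k_1, 1 ≤ j ≤ k) and b_{i,j} (1 ≤ i ≤ k_2, 1 ≤ j ≤ k) such that for every j ∈ {1, …, k}: r + j·d = Σ_{i=1}^{k_1} a_{i,j} s_i − Σ_{i=1}^{k_2} b_{i,j} t_i and Σ_{i=1}^{k_1} a_{i,j} + Σ_{i=1}^{k_2} b_{i,j} = f. -/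

import Mathlib

/-! For `m = 1, …, k` write `m·d` through a Bézout representation `d = Σ αᵢ sᵢ − Σ βⱼ tⱼ`, which can be
chosen with `Σ αᵢ + Σ βⱼ = 0` because `d` is the gcd of the sums `sᵢ + tⱼ`: expanding
`d = Σ c_{ij} (sᵢ + tⱼ)` gives the row sums as `α` and minus the column sums as `β`.
Adding `k·|αᵢ|` and `k·|βⱼ|` to the coefficients `m αᵢ`, `m βⱼ` makes them nonnegative while shifting
the value by a constant `r` independent of `m`, and the balance `Σ αᵢ + Σ βⱼ = 0` makes the total
coefficient sum independent of `m` as well. -/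

open Finset

theorem Finset.natCast_gcd {ι : Type*} (s : Finset ι) (f : ι → ℕ) :
    ((s.gcd f : ℕ) : ℤ) = s.gcd (fun i => (f i : ℤ)) := by
  classical
  induction s using Finset.induction with
  | empty => simp
  | insert a s ha ih =>
    rw [gcd_insert, gcd_insert, ← ih, ← Int.coe_gcd, Int.gcd_natCast_natCast]
    rfl

theorem exists_balanced_bezout_of_gcd_add {ι κ : Type*} [Fintype ι] [Fintype κ]
    (s : ι → ℕ) (t : κ → ℕ) :
    ∃ (α : ι → ℤ) (β : κ → ℤ),
      ∑ i, α i * s i - ∑ j, β j * t j = (univ.gcd (fun p : ι × κ => s p.1 + t p.2) : ℕ) ∧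
      ∑ i, α i + ∑ j, β j = 0 := by
  obtain ⟨c, hc⟩ := univ.gcd_eq_sum_mul (fun p : ι × κ => ((s p.1 + t p.2 : ℕ) : ℤ))
  refine ⟨fun i => ∑ j, c (i, j), fun j => -∑ i, c (i, j), ?_, ?_⟩
  · rw [Finset.natCast_gcd, hc, Fintype.sum_prod_type]
    simp only [neg_mul, sum_neg_distrib, sub_neg_eq_add, sum_mul]
    rw [sum_comm (γ := κ), ← sum_add_distrib]
    refine sum_congr rfl fun i _ => ?_
    rw [← sum_add_distrib]
    refine sum_congr rfl fun j _ => ?_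
    push_cast
    ring
  · rw [sum_neg_distrib, sum_comm, add_neg_cancel]

theorem mul_add_mul_abs_nonneg {m K : ℤ} (hm : |m| ≤ K) (x : ℤ) : 0 ≤ m * x + K * |x| := by
  have : |m * x| ≤ K * |x| := by
    rw [abs_mul]
    exact mul_le_mul_of_nonneg_right hm (abs_nonneg x)
  linarith [neg_abs_le (m * x)]

theorem sum_toNat_mul_add_mul_abs_mul {ι : Type*} [Fintype ι] {m K : ℤ} (hm : |m| ≤ K)
    (α w : ι → ℤ) :
    ∑ i, ((m * α i + K * |α i|).toNat : ℤ) * w i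
      = m * ∑ i, α i * w i + K * ∑ i, |α i| * w i := by
  simp only [Int.toNat_of_nonneg (mul_add_mul_abs_nonneg hm _), mul_sum, ← sum_add_distrib]
  refine sum_congr rfl fun i _ => ?_
  ring

theorem exists_nat_representation_of_balanced_bezout {ι κ : Type*} [Fintype ι] [Fintype κ]
    {s : ι → ℤ} {t : κ → ℤ} {α : ι → ℤ} {β : κ → ℤ} {d : ℤ}
    (hrep : ∑ i, α i * s i - ∑ j, β j * t j = d) (hbal : ∑ i, α i + ∑ j, β j = 0) (K : ℕ) :
    ∃ (r : ℤ) (f : ℕ) (a : ℤ → ι → ℕ) (b : ℤ → κ → ℕ), ∀ m : ℤ, |m| ≤ K →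
      r + m * d = ∑ i, (a m i : ℤ) * s i - ∑ j, (b m j : ℤ) * t j ∧
      ∑ i, a m i + ∑ j, b m j = f := by
  obtain ⟨f, hf⟩ : ∃ f : ℕ, K * (∑ i, |α i| + ∑ j, |β j|) = f :=
    Int.eq_ofNat_of_zero_le <| mul_nonneg K.cast_nonneg <|
      add_nonneg (sum_nonneg fun i _ => abs_nonneg _) (sum_nonneg fun j _ => abs_nonneg _)
  refine ⟨K * (∑ i, |α i| * s i - ∑ j, |β j| * t j), f,
    fun m i => (m * α i + K * |α i|).toNat, fun m j => (m * β j + K * |β j|).toNat,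
    fun m hm => ⟨?_, ?_⟩⟩
  · rw [sum_toNat_mul_add_mul_abs_mul hm, sum_toNat_mul_add_mul_abs_mul hm, ← hrep]
    ring
  · have hα := sum_toNat_mul_add_mul_abs_mul hm α 1
    have hβ := sum_toNat_mul_add_mul_abs_mul hm β 1
    simp only [Pi.one_apply, mul_one] at hα hβ
    apply Nat.cast_injective (R := ℤ)
    push_cast
    rw [hα, hβ, ← hf]
    linear_combination m * hbal

theorem consecutive_multiples_representation_general (k₁ k₂ : ℕ)
    (s : Fin (k₁ + 1) → ℕ) (t : Fin (k₂ + 1) → ℕ)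
    (d : ℕ)
    (hd : d = Finset.univ.gcd (fun p : Fin (k₁ + 1) × Fin (k₂ + 1) => s p.1 + t p.2))
    (k : ℕ) :
    ∃ r : ℤ, ∃ f : ℕ, ∃ a : Fin (k₁ + 1) → Fin k → ℕ, ∃ b : Fin (k₂ + 1) → Fin k → ℕ,
      ∀ j : Fin k,
        (r + ((j : ℕ) + 1 : ℤ) * (d : ℤ)
            = ∑ i, (a i j : ℤ) * (s i : ℤ) - ∑ i, (b i j : ℤ) * (t i : ℤ)) ∧
        (∑ i, a i j) + (∑ i, b i j) = f := by
  obtain ⟨α, β, hrep, hbal⟩ := exists_balanced_bezout_of_gcd_add s t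
  rw [← hd] at hrep
  obtain ⟨r, f, a, b, h⟩ := exists_nat_representation_of_balanced_bezout hrep hbal k
  refine ⟨r, f, fun i j => a ((j : ℕ) + 1) i, fun i j => b ((j : ℕ) + 1) i, fun j => h _ ?_⟩
  rw [abs_of_nonneg (by positivity)]
  exact_mod_cast j.isLt

/-- For every positive integer `k` there exist an integer `r`, a
constant `f`, and nonnegative integers `a_{i,j}`, `b_{i,j}` such that for every
`j ∈ {1, …, k}`: `r + j·d = Σ_i a_{i,j} s_i − Σ_i b_{i,j} t_i` with
`Σ_i a_{i,j} + Σ_i b_{i,j} = f`. -/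
theorem consecutive_multiples_representation (k₁ k₂ : ℕ)
    (s : Fin (k₁ + 1) → ℕ) (t : Fin (k₂ + 1) → ℕ)
    (hs : StrictMono s) (ht : StrictMono t)
    (hspos : ∀ i, 0 < s i) (htpos : ∀ j, 0 < t j)
    (d : ℕ)
    (hd : d = Finset.univ.gcd (fun p : Fin (k₁ + 1) × Fin (k₂ + 1) => s p.1 + t p.2))
    (k : ℕ) (hk : 0 < k) :
    ∃ r : ℤ, ∃ f : ℕ, ∃ a : Fin (k₁ + 1) → Fin k → ℕ, ∃ b : Fin (k₂ + 1) → Fin k → ℕ,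
      ∀ j : Fin k,
        (r + ((j : ℕ) + 1 : ℤ) * (d : ℤ)
            = ∑ i, (a i j : ℤ) * (s i : ℤ) - ∑ i, (b i j : ℤ) * (t i : ℤ)) ∧
        (∑ i, a i j) + (∑ i, b i j) = f :=
  consecutive_multiples_representation_general k₁ k₂ s t d hd k
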